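/- arXiv:2505.09349 — 6 statements merged into one kernel-verified Lean document; each statement's English description precedes it below -/
import Mathlib

section
/- Let f : ℝ^d → ℝ be μ_f-strongly convex and g : ℝ^d → ℝ be convex and L_g-Lipschitz continuous. For each λ ≥ 0 let x_λ denote the unique minimizer of the Lagrangian L(x,λ) = f(x) + λ g(x) over ℝ^d. Then for any λ₁, λ₂ ≥ 0, |g(x_{λ₁}) - g(x_{λ₂})| ≤ (2 L_g² / μ_f) |λ₁ - λ₂|; that is, the dual function d(λ) = min_x L(x,λ) is differentiable with gradient g(x_λ) and is (2 L_g² / μ_f)-smooth. -/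
open Set Filter Topology

/-- Quadratic growth at the minimizer of a strongly convex + convex combination. -/
lemma quad_growth {d : ℕ} (f g : EuclideanSpace ℝ (Fin d) → ℝ)
    (μf : ℝ)
    (hf : StrongConvexOn Set.univ μf f)
    (hg : ConvexOn ℝ Set.univ g)
    (lam : ℝ) (hlam : 0 ≤ lam) (x : EuclideanSpace ℝ (Fin d))
    (hx : ∀ y, f x + lam * g x ≤ f y + lam * g y)
    (y : EuclideanSpace ℝ (Fin d)) :
    f x + lam * g x + μf / 2 * ‖y - x‖ ^ 2 ≤ f y + lam * g y := by
  set c : ℝ := μf / 2 * ‖y - x‖ ^ 2 with hc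
  set D : ℝ := (f y + lam * g y) - (f x + lam * g x) with hD
  have key : ∀ t : ℝ, t ∈ Ioo (0:ℝ) 1 → (1 - t) * c ≤ D := by
    intro t ht
    have ht0 : 0 < t := ht.1
    have ht1 : (0:ℝ) ≤ 1 - t := by linarith [ht.2]
    have hab : t + (1 - t) = 1 := by ring
    have hB := hf.2 (mem_univ y) (mem_univ x) ht0.le ht1 hab
    have hC := hg.2 (mem_univ y) (mem_univ x) ht0.le ht1 hab
    have hA := hx (t • y + (1 - t) • x)
    simp only [smul_eq_mul] at hB hC
    have hC' := mul_le_mul_of_nonneg_left hC hlam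
    nlinarith [hB, hC', hA, ht0, mul_pos ht0 ht0]
  have hev : ∀ᶠ t in 𝓝[>] (0:ℝ), (1 - t) * c ≤ D := by
    filter_upwards [Ioo_mem_nhdsGT_of_mem (by constructor <;> norm_num :
      (0:ℝ) ∈ Ico (0:ℝ) 1)] with t ht using key t ht
  have hlim : Tendsto (fun t : ℝ => (1 - t) * c) (𝓝[>] (0:ℝ)) (𝓝 c) := by
    have h0 : Tendsto (fun t : ℝ => (1 - t) * c) (𝓝 (0:ℝ)) (𝓝 ((1 - 0) * c)) :=
      (tendsto_const_nhds.sub tendsto_id).mul tendsto_const_nhds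
    simpa using h0.mono_left nhdsWithin_le_nhds
  have hfin := le_of_tendsto hlim hev
  simp only [hD, hc] at hfin ⊢
  linarith

/-- For μ_f-strongly-convex f and convex L_g-Lipschitz g, the dual
function is (2 L_g² / μ_f)-smooth: |g(x_{λ₁}) - g(x_{λ₂})| ≤ (2L_g²/μ_f)|λ₁-λ₂|,
where x_λ is the unique minimizer of L(·,λ) = f + λ g. -/
theorem dual_smoothness {d : ℕ} (f g : EuclideanSpace ℝ (Fin d) → ℝ)
    (μf Lg : ℝ) (hμ : 0 < μf) (hLg : 0 ≤ Lg)
    (hf : StrongConvexOn Set.univ μf f)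
    (hg : ConvexOn ℝ Set.univ g)
    (hgLip : ∀ x y, |g x - g y| ≤ Lg * ‖x - y‖)
    (xl : ℝ → EuclideanSpace ℝ (Fin d))
    (hmin : ∀ lam, 0 ≤ lam → ∀ y, f (xl lam) + lam * g (xl lam) ≤ f y + lam * g y)
    (lam₁ lam₂ : ℝ) (h₁ : 0 ≤ lam₁) (h₂ : 0 ≤ lam₂) :
    |g (xl lam₁) - g (xl lam₂)| ≤ (2 * Lg ^ 2 / μf) * |lam₁ - lam₂| := by
  set x1 := xl lam₁
  set x2 := xl lam₂
  set n : ℝ := ‖x1 - x2‖ with hn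
  have hn0 : 0 ≤ n := norm_nonneg _
  have hq1 := quad_growth f g μf hf hg lam₁ h₁ x1 (hmin lam₁ h₁) x2
  have hq2 := quad_growth f g μf hf hg lam₂ h₂ x2 (hmin lam₂ h₂) x1
  have hnn : ‖x2 - x1‖ = n := by rw [hn, norm_sub_rev]
  rw [hnn] at hq1
  rw [← hn] at hq2
  have hsum : μf * n ^ 2 ≤ (lam₁ - lam₂) * (g x2 - g x1) := by nlinarith
  have hlip : |g x2 - g x1| ≤ Lg * n := by
    have h := hgLip x2 x1; rwa [hnn] at h
  have hub : (lam₁ - lam₂) * (g x2 - g x1) ≤ |lam₁ - lam₂| * (Lg * n) := by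
    calc (lam₁ - lam₂) * (g x2 - g x1) ≤ |(lam₁ - lam₂) * (g x2 - g x1)| := le_abs_self _
    _ = |lam₁ - lam₂| * |g x2 - g x1| := abs_mul _ _
    _ ≤ |lam₁ - lam₂| * (Lg * n) := mul_le_mul_of_nonneg_left hlip (abs_nonneg _)
  have hkey : μf * n ^ 2 ≤ |lam₁ - lam₂| * (Lg * n) := hsum.trans hub
  have hnb : n ≤ Lg * |lam₁ - lam₂| / μf := by
    rcases eq_or_lt_of_le hn0 with h | h
    · rw [← h]; positivity
    · rw [le_div_iff₀ hμ]
      nlinarith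
  have h1 : |g x1 - g x2| ≤ Lg * n := hgLip x1 x2
  calc |g x1 - g x2| ≤ Lg * n := h1
    _ ≤ Lg * (Lg * |lam₁ - lam₂| / μf) := mul_le_mul_of_nonneg_left hnb hLg
    _ ≤ (2 * Lg ^ 2 / μf) * |lam₁ - lam₂| := by
        have e1 : Lg * (Lg * |lam₁ - lam₂| / μf) = Lg ^ 2 * |lam₁ - lam₂| / μf := by ring
        have e2 : 2 * Lg ^ 2 / μf * |lam₁ - lam₂| = 2 * (Lg ^ 2 * |lam₁ - lam₂|) / μf := by ring
        rw [e1, e2, div_le_div_iff₀ hμ hμ]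
        nlinarith [mul_nonneg (sq_nonneg Lg) (abs_nonneg (lam₁ - lam₂)), hμ.le]
end

section
/- Let f, g : ℝ^d → ℝ with g(x₀) < 0, and set λ̌ ≥ (f(x₀) - inf_x f(x)) / (-g(x₀)). Then any point x with L(x, λ̌) ≤ L(x₀, λ̌), where L(x,λ) = f(x) + λ g(x), satisfies g(x) ≤ 0. In particular, all iterates of any descent method for L(·, λ̌) started at x₀ are feasible. -/
open Set

/-- With g(x₀) < 0 and λ̌ ≥ (f(x₀) - inf f)/(-g(x₀)) (λ̌ > 0), any point
with L(x,λ̌) ≤ L(x₀,λ̌) satisfies g(x) ≤ 0; so all descent iterates are feasible. -/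
theorem descent_feasibility {d : ℕ} (f g : EuclideanSpace ℝ (Fin d) → ℝ)
    (x₀ : EuclideanSpace ℝ (Fin d)) (hx₀ : g x₀ < 0)
    (m : ℝ) (hm : ∀ x, m ≤ f x)
    (lamc : ℝ) (hlam_pos : 0 < lamc)
    (hlam : (f x₀ - m) / (-g x₀) ≤ lamc)
    (x : EuclideanSpace ℝ (Fin d))
    (hdesc : f x + lamc * g x ≤ f x₀ + lamc * g x₀) :
    g x ≤ 0 := by
  have h0 : (0:ℝ) < -g x₀ := by linarith
  rw [div_le_iff₀ h0] at hlam
  have hmx := hm x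
  nlinarith [mul_pos hlam_pos h0]
end

section
/- Let f be μ_f-strongly convex and g be convex and L_g-Lipschitz; for λ ≥ 0 let x_λ = argmin_x (f(x) + λ g(x)). Suppose λ_{t+1} ≤ λ_t with λ_t - λ_{t+1} ≤ c for some c ≥ 0, and x_t satisfies L(x_t, λ_t) - L(x_{λ_t}, λ_t) ≤ η. Then ‖x_{λ_{t+1}} - x_t‖ ≤ (2 L_g / μ_f) c + √(2η/μ_f). -/
open Set Filter Topology

lemma quad_growth_s6 {E : Type*} [NormedAddCommGroup E] [NormedSpace ℝ E]
    (F : E → ℝ) (μ : ℝ) (hF : StrongConvexOn Set.univ μ F)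
    (xs : E) (hxs : ∀ y, F xs ≤ F y) (x : E) :
    μ / 2 * ‖x - xs‖ ^ 2 ≤ F x - F xs := by
  set A := μ / 2 * ‖x - xs‖ ^ 2 with hA
  have key : ∀ t : ℝ, t ∈ Ioo (0:ℝ) 1 → (1 - t) * A ≤ F x - F xs := by
    intro t ht
    have h1 : F (t • x + (1 - t) • xs) ≤ t • F x + (1 - t) • F xs - t * (1 - t) * (μ / 2 * ‖x - xs‖ ^ 2) :=
      hF.2 (mem_univ x) (mem_univ xs) ht.1.le (by linarith [ht.2]) (by ring)
    have h2 := hxs (t • x + (1 - t) • xs)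
    simp only [smul_eq_mul] at h1
    have h3 : t * ((1 - t) * A) ≤ t * (F x - F xs) := by rw [hA]; nlinarith
    exact le_of_mul_le_mul_left (by linarith) ht.1
  have htend : Tendsto (fun t : ℝ => (1 - t) * A) (𝓝[>] 0) (𝓝 A) := by
    have : Tendsto (fun t : ℝ => (1 - t) * A) (𝓝 0) (𝓝 ((1 - 0) * A)) := by
      exact (continuous_const.sub continuous_id).mul continuous_const |>.tendsto 0
    simpa using this.mono_left nhdsWithin_le_nhds
  refine le_of_tendsto htend ?_
  filter_upwards [Ioo_mem_nhdsGT_of_mem (by constructor <;> norm_num : (0:ℝ) ∈ Ico (0:ℝ) 1)]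
    with t ht using key t ht

/-- Safe transition bound: under strong convexity of f, convexity and
Lipschitzness of g, if λ_{t+1} ≤ λ_t with λ_t - λ_{t+1} ≤ c and x_t is an η-approximate
minimizer of L(·,λ_t), then ‖x_{λ_{t+1}} - x_t‖ ≤ (2L_g/μ_f)c + √(2η/μ_f). -/
theorem safe_transition {d : ℕ} (f g : EuclideanSpace ℝ (Fin d) → ℝ)
    (μf Lg : ℝ) (hμ : 0 < μf) (hLg : 0 ≤ Lg)
    (hf : StrongConvexOn Set.univ μf f)
    (hg : ConvexOn ℝ Set.univ g)
    (hgLip : ∀ x y, |g x - g y| ≤ Lg * ‖x - y‖)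
    (xl : ℝ → EuclideanSpace ℝ (Fin d))
    (hmin : ∀ lam, 0 ≤ lam → ∀ y, f (xl lam) + lam * g (xl lam) ≤ f y + lam * g y)
    (lamt lamt1 c η : ℝ) (hc : 0 ≤ c) (hη : 0 ≤ η)
    (hlam0 : 0 ≤ lamt1) (hmono : lamt1 ≤ lamt) (hstep : lamt - lamt1 ≤ c)
    (xt : EuclideanSpace ℝ (Fin d))
    (hsub : f xt + lamt * g xt - (f (xl lamt) + lamt * g (xl lamt)) ≤ η) :
    ‖xl lamt1 - xt‖ ≤ (2 * Lg / μf) * c + Real.sqrt (2 * η / μf) := by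
  have hlamt : 0 ≤ lamt := hlam0.trans hmono
  -- strong convexity of L(·, lam)
  have hSC : ∀ lam : ℝ, 0 ≤ lam →
      StrongConvexOn Set.univ μf (fun x => f x + lam * g x) := by
    intro lam hlam
    refine ⟨convex_univ, fun x _ y _ a b ha hb hab => ?_⟩
    have h1 := hf.2 (mem_univ x) (mem_univ y) ha hb hab
    have h2 := hg.2 (mem_univ x) (mem_univ y) ha hb hab
    simp only [smul_eq_mul] at h1 h2 ⊢
    nlinarith [mul_le_mul_of_nonneg_left h2 hlam]
  -- quadratic growth bounds
  have q1 := quad_growth_s6 _ μf (hSC lamt hlamt) (xl lamt) (hmin lamt hlamt) xt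
  have q2 := quad_growth_s6 _ μf (hSC lamt hlamt) (xl lamt) (hmin lamt hlamt) (xl lamt1)
  have q3 := quad_growth_s6 _ μf (hSC lamt1 hlam0) (xl lamt1) (hmin lamt1 hlam0) (xl lamt)
  -- bound 1: ‖xl lamt - xt‖ ≤ sqrt (2η/μf)
  have b1 : ‖xl lamt - xt‖ ≤ Real.sqrt (2 * η / μf) := by
    rw [show xl lamt - xt = -(xt - xl lamt) by abel, norm_neg]
    rw [Real.le_sqrt (norm_nonneg _), le_div_iff₀ hμ]
    · nlinarith
    · positivity
  -- bound 2: ‖xl lamt1 - xl lamt‖ ≤ 2 Lg / μf * c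
  set D := ‖xl lamt1 - xl lamt‖ with hD
  have hD0 : 0 ≤ D := norm_nonneg _
  have hsum : μf * D ^ 2 ≤ (lamt - lamt1) * (g (xl lamt1) - g (xl lamt)) := by
    have e1 : ‖xl lamt - xl lamt1‖ = D := by
      rw [hD, ← norm_neg]; congr 1; abel
    rw [e1] at q3
    nlinarith [q2, q3]
  have hgb : g (xl lamt1) - g (xl lamt) ≤ Lg * D := by
    have := hgLip (xl lamt1) (xl lamt)
    rw [← hD] at this
    exact (le_abs_self _).trans this
  have b2 : D ≤ 2 * Lg / μf * c := by
    rcases eq_or_lt_of_le hD0 with h0 | h0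
    · rw [← h0]; positivity
    · have h4 : μf * D ^ 2 ≤ c * (Lg * D) := by
        calc μf * D ^ 2 ≤ (lamt - lamt1) * (g (xl lamt1) - g (xl lamt)) := hsum
          _ ≤ c * (Lg * D) := by
              rcases le_or_gt (g (xl lamt1) - g (xl lamt)) 0 with h | h
              · have h5 : (lamt - lamt1) * (g (xl lamt1) - g (xl lamt)) ≤ 0 :=
                  mul_nonpos_of_nonneg_of_nonpos (by linarith) h
                have h6 : 0 ≤ c * (Lg * D) := mul_nonneg hc (mul_nonneg hLg hD0)
                linarith
              · nlinarith
      rw [div_mul_eq_mul_div, le_div_iff₀ hμ]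
      nlinarith
  calc ‖xl lamt1 - xt‖ ≤ D + ‖xl lamt - xt‖ := by
        rw [hD]
        simpa using norm_sub_le_norm_sub_add_norm_sub (xl lamt1) (xl lamt) xt
    _ ≤ 2 * Lg / μf * c + Real.sqrt (2 * η / μf) := add_le_add b2 b1
    _ = (2 * Lg / μf) * c + Real.sqrt (2 * η / μf) := by ring
end

section
/- Let f be μ_f-strongly convex, g convex and L_g-Lipschitz, x_λ = argmin_x (f(x)+λg(x)). Suppose λ_{t+1} ≤ λ_t, λ_t - λ_{t+1} ≤ μ_f(-ĝ)/(4 L_g²), and x_t satisfies L(x_t,λ_t) - L(x_{λ_t},λ_t) ≤ μ_f ĝ²/(8 L_g²), where ĝ ≤ 0. Then ‖x_{λ_{t+1}} - x_t‖ ≤ (-ĝ)/L_g. -/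
open Set

/-- Quadratic growth at a global minimizer of a strongly convex function. -/
lemma quad_growth_aux {E : Type*} [NormedAddCommGroup E] [NormedSpace ℝ E]
    (F : E → ℝ) (μ : ℝ) (hF : StrongConvexOn Set.univ μ F)
    (xs : E) (hmin : ∀ y, F xs ≤ F y) (y : E) :
    μ / 2 * ‖y - xs‖ ^ 2 ≤ F y - F xs := by
  have key : ∀ t : ℝ, 0 < t → t < 1 → (1 - t) * (μ / 2 * ‖y - xs‖ ^ 2) ≤ F y - F xs := by
    intro t ht ht1
    have h2 := hF.2 (Set.mem_univ y) (Set.mem_univ xs) ht.le (by linarith : (0:ℝ) ≤ 1 - t)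
      (by ring)
    have h3 := hmin (t • y + (1 - t) • xs)
    simp only [smul_eq_mul] at h2
    nlinarith [h2, h3]
  set c : ℝ := μ / 2 * ‖y - xs‖ ^ 2 with hc
  have htend : Filter.Tendsto (fun t : ℝ => (1 - t) * c) (nhdsWithin 0 (Set.Ioi 0)) (nhds c) := by
    have hcont : Continuous fun t : ℝ => (1 - t) * c := by continuity
    have := hcont.tendsto 0
    simpa using this.mono_left nhdsWithin_le_nhds
  refine le_of_tendsto htend ?_
  filter_upwards [Ioo_mem_nhdsGT_of_mem (by simp : (0:ℝ) ∈ Set.Ico 0 1)] with t ht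
  exact key t ht.1 ht.2

lemma lagrange_strong_convex {E : Type*} [NormedAddCommGroup E] [NormedSpace ℝ E]
    (f g : E → ℝ) (μ lam : ℝ) (hlam : 0 ≤ lam)
    (hf : StrongConvexOn Set.univ μ f) (hg : ConvexOn ℝ Set.univ g) :
    StrongConvexOn Set.univ μ (fun x => f x + lam * g x) := by
  refine ⟨convex_univ, fun x _ y _ a b ha hb hab => ?_⟩
  have h1 := hf.2 (Set.mem_univ x) (Set.mem_univ y) ha hb hab
  have h2 := hg.2 (Set.mem_univ x) (Set.mem_univ y) ha hb hab
  simp only [smul_eq_mul] at h1 h2 ⊢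
  nlinarith [mul_le_mul_of_nonneg_left h2 hlam]

/-- Instantiated safe transition: with dual step λ_t - λ_{t+1} ≤
μ_f(-ĝ)/(4L_g²) and primal accuracy μ_f ĝ²/(8L_g²) (with ĝ ≤ 0), the next
Lagrangian minimizer satisfies ‖x_{λ_{t+1}} - x_t‖ ≤ (-ĝ)/L_g. -/
theorem safe_transition_instantiated {d : ℕ} (f g : EuclideanSpace ℝ (Fin d) → ℝ)
    (μf Lg ghat : ℝ) (hμ : 0 < μf) (hLg : 0 < Lg) (hghat : ghat ≤ 0)
    (hf : StrongConvexOn Set.univ μf f)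
    (hg : ConvexOn ℝ Set.univ g)
    (hgLip : ∀ x y, |g x - g y| ≤ Lg * ‖x - y‖)
    (xl : ℝ → EuclideanSpace ℝ (Fin d))
    (hmin : ∀ lam, 0 ≤ lam → ∀ y, f (xl lam) + lam * g (xl lam) ≤ f y + lam * g y)
    (lamt lamt1 : ℝ) (hlam0 : 0 ≤ lamt1) (hmono : lamt1 ≤ lamt)
    (hstep : lamt - lamt1 ≤ μf * (-ghat) / (4 * Lg ^ 2))
    (xt : EuclideanSpace ℝ (Fin d))
    (hsub : f xt + lamt * g xt - (f (xl lamt) + lamt * g (xl lamt)) ≤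
      μf * ghat ^ 2 / (8 * Lg ^ 2)) :
    ‖xl lamt1 - xt‖ ≤ -ghat / Lg := by
  have hlamt : (0:ℝ) ≤ lamt := le_trans hlam0 hmono
  -- strong convexity of the two Lagrangians
  have hLt := lagrange_strong_convex f g μf lamt hlamt hf hg
  have hLt1 := lagrange_strong_convex f g μf lamt1 hlam0 hf hg
  -- quadratic growth at both minimizers
  have hq1 := quad_growth_aux _ μf hLt (xl lamt) (hmin lamt hlamt) (xl lamt1)
  have hq2 := quad_growth_aux _ μf hLt1 (xl lamt1) (hmin lamt1 hlam0) (xl lamt)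
  have hq3 := quad_growth_aux _ μf hLt (xl lamt) (hmin lamt hlamt) xt
  set Δ : ℝ := ‖xl lamt1 - xl lamt‖ with hΔ
  have hΔ0 : 0 ≤ Δ := norm_nonneg _
  -- Lipschitz bound on g difference
  have hlip : |g (xl lamt1) - g (xl lamt)| ≤ Lg * Δ := hgLip _ _
  have hnormsymm : ‖xl lamt - xl lamt1‖ = Δ := by rw [hΔ, norm_sub_rev]
  rw [hnormsymm] at hq2
  -- sum the two growth inequalities:
  -- μf * Δ^2 ≤ (lamt - lamt1) * (g (xl lamt1) - g (xl lamt)) ≤ (lamt - lamt1) * Lg * Δ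
  have hsum : μf * Δ ^ 2 ≤ (lamt - lamt1) * (g (xl lamt1) - g (xl lamt)) := by
    nlinarith [hq1, hq2]
  have habs : g (xl lamt1) - g (xl lamt) ≤ Lg * Δ := le_trans (le_abs_self _) hlip
  have hstep' : 0 ≤ lamt - lamt1 := by linarith
  have hΔbound : μf * Δ ^ 2 ≤ (lamt - lamt1) * (Lg * Δ) := by
    calc μf * Δ ^ 2 ≤ (lamt - lamt1) * (g (xl lamt1) - g (xl lamt)) := hsum
    _ ≤ (lamt - lamt1) * (Lg * Δ) := by
        exact mul_le_mul_of_nonneg_left habs hstep'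
  have hΔle : Δ ≤ (lamt - lamt1) * Lg / μf := by
    rcases eq_or_lt_of_le hΔ0 with h0 | h0
    · rw [← h0]; positivity
    · rw [le_div_iff₀ hμ]
      nlinarith
  -- bound Δ by -ghat/(4 Lg)
  have hΔ2 : Δ ≤ -ghat / (4 * Lg) := by
    calc Δ ≤ (lamt - lamt1) * Lg / μf := hΔle
    _ ≤ (μf * (-ghat) / (4 * Lg ^ 2)) * Lg / μf := by gcongr
    _ = -ghat / (4 * Lg) := by field_simp
  -- bound ‖xt - xl lamt‖ by -ghat/(2 Lg)
  have hA : ‖xt - xl lamt‖ ≤ -ghat / (2 * Lg) := by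
    have h1 : μf / 2 * ‖xt - xl lamt‖ ^ 2 ≤ μf * ghat ^ 2 / (8 * Lg ^ 2) :=
      le_trans hq3 hsub
    have hb : (0:ℝ) ≤ -ghat / (2 * Lg) := div_nonneg (by linarith) (by positivity)
    rw [le_div_iff₀ (by positivity : (0:ℝ) < 8 * Lg ^ 2)] at h1
    have hsq : ‖xt - xl lamt‖ ^ 2 ≤ (-ghat / (2 * Lg)) ^ 2 := by
      rw [div_pow, le_div_iff₀ (by positivity : (0:ℝ) < (2 * Lg) ^ 2)]
      nlinarith [h1, hμ]
    exact (pow_le_pow_iff_left₀ (norm_nonneg _) hb (by norm_num)).mp hsq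
  -- triangle inequality
  have htri : ‖xl lamt1 - xt‖ ≤ Δ + ‖xt - xl lamt‖ := by
    have h := norm_add_le (xl lamt1 - xl lamt) (xl lamt - xt)
    have he : xl lamt1 - xl lamt + (xl lamt - xt) = xl lamt1 - xt := by abel
    rw [he] at h
    rw [norm_sub_rev xt (xl lamt)]
    exact h
  have h4 : -ghat / (4 * Lg) = (-ghat / Lg) / 4 := by ring
  have h2 : -ghat / (2 * Lg) = (-ghat / Lg) / 2 := by ring
  have hnn : (0:ℝ) ≤ -ghat / Lg := div_nonneg (by linarith) hLg.le
  linarith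
end

section
/- Let g : ℝ^d → ℝ be differentiable, x_{k-1} a point, ρ_g > 0, and let x̌ minimize h(x) = g(x) + (ρ_g/2)‖x - x_{k-1}‖². Assume h is μ_g-strongly convex, g(x_{k-1}) ≤ 0, and ‖∇g(x̌)‖ ≥ l > 0. Then -h(x̌) ≥ μ_g l² / (2 ρ_g²). -/
set_option maxHeartbeats 1000000


open Set

/-- If x̌ minimizes h = g + (ρ_g/2)‖·-x_{k-1}‖², h is μ_g-strongly
convex, g(x_{k-1}) ≤ 0, and ‖∇g(x̌)‖ ≥ l > 0, then -h(x̌) ≥ μ_g l²/(2ρ_g²). -/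
theorem regularized_min_lower_bound {d : ℕ}
    (g : EuclideanSpace ℝ (Fin d) → ℝ) (hdiff : Differentiable ℝ g)
    (xkm1 xcheck : EuclideanSpace ℝ (Fin d)) (ρg μg l : ℝ)
    (hρ : 0 < ρg) (hμ : 0 < μg) (hl : 0 < l)
    (h : EuclideanSpace ℝ (Fin d) → ℝ)
    (hdef : ∀ x, h x = g x + ρg / 2 * ‖x - xkm1‖ ^ 2)
    (hmin : ∀ y, h xcheck ≤ h y)
    (hsc : ∀ y, h xcheck + μg / 2 * ‖y - xcheck‖ ^ 2 ≤ h y)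
    (hfeas : g xkm1 ≤ 0)
    (hgrad : l ≤ ‖gradient g xcheck‖) :
    μg * l ^ 2 / (2 * ρg ^ 2) ≤ -h xcheck := by
  -- derivative of the quadratic part
  have hq : HasFDerivAt (fun x : EuclideanSpace ℝ (Fin d) => ‖x - xkm1‖ ^ 2)
      (2 • (innerSL ℝ (xcheck - xkm1))) xcheck := by
    have := ((hasFDerivAt_id xcheck).sub_const xkm1).norm_sq
    simpa using this
  have heq : h = fun x => g x + ρg / 2 * ‖x - xkm1‖ ^ 2 := funext hdef
  have hh : HasFDerivAt h
      (fderiv ℝ g xcheck + (ρg / 2) • (2 • (innerSL ℝ (xcheck - xkm1)))) xcheck := by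
    rw [heq]
    exact (hdiff xcheck).hasFDerivAt.add (hq.const_mul (ρg / 2))
  have hloc : IsLocalMin h xcheck := Filter.Eventually.of_forall fun y => hmin y
  have hz := hloc.hasFDerivAt_eq_zero hh
  have h1 : fderiv ℝ g xcheck = -((ρg / 2) • (2 • (innerSL ℝ (xcheck - xkm1)))) := by
    rw [eq_neg_iff_add_eq_zero]; exact hz
  have hsimp : (ρg / 2) • (2 • (innerSL ℝ (xcheck - xkm1)))
      = ρg • (innerSL ℝ (xcheck - xkm1)) := by
    ext y
    simp [smul_smul]
    ring
  have hnorm : ‖gradient g xcheck‖ = ρg * ‖xcheck - xkm1‖ := by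
    rw [gradient, LinearIsometryEquiv.norm_map, h1, norm_neg, hsimp, norm_smul,
      innerSL_apply_norm, Real.norm_eq_abs, abs_of_pos hρ]
  have hdist : l ≤ ρg * ‖xcheck - xkm1‖ := hnorm ▸ hgrad
  have hsc' := hsc xkm1
  have hval : h xkm1 = g xkm1 := by rw [hdef]; simp
  have hrev : ‖xkm1 - xcheck‖ = ‖xcheck - xkm1‖ := norm_sub_rev _ _
  rw [hval, hrev] at hsc'
  have hn : (0:ℝ) ≤ ‖xcheck - xkm1‖ := norm_nonneg _
  have step1 : h xcheck + μg / 2 * ‖xcheck - xkm1‖ ^ 2 ≤ 0 := le_trans hsc' hfeas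
  have hl2 : l ^ 2 ≤ ρg ^ 2 * ‖xcheck - xkm1‖ ^ 2 := by nlinarith
  rw [div_le_iff₀ (by positivity)]
  nlinarith [mul_le_mul_of_nonneg_left hl2 hμ.le,
    mul_nonneg (by positivity : (0:ℝ) ≤ 2 * ρg ^ 2)
      (by linarith : (0:ℝ) ≤ -h xcheck - μg / 2 * ‖xcheck - xkm1‖ ^ 2)]
end

section
/- Let d : ℝ → ℝ be concave and differentiable, λ* ≥ 0 a maximizer of d over [0,∞), and consider projected gradient ascent λ_{t+1} = max{λ_t + γ ĝ_t, 0} with γ > 0, where ĝ_t = d'(λ_t) + e_t are inexact gradients with d'(λ_t) ≤ 0 and |e_t| ≤ |d'(λ_t)|/2. If additionally d is μ_d-strongly concave on the region containing the iterates and γ ≤ 1/(2L) where d is L-smooth, then λ_{t+1} - λ* ≤ (1 - γμ_d/4)(λ_t - λ*) whenever λ_t ≥ λ*. -/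
open Set

/-- Derivative at a maximizer over `Ici a` is nonpositive. -/
lemma deriv_nonpos_of_isMaxOn_Ici {d : ℝ → ℝ} {a : ℝ} (hdiff : Differentiable ℝ d)
    (hmax : ∀ x, a ≤ x → d x ≤ d a) : deriv d a ≤ 0 := by
  have hloc : IsLocalMaxOn d (Set.Ici a) a :=
    Filter.eventually_inf_principal.2 (Filter.Eventually.of_forall fun x hx => hmax x hx)
  have hcone : (1 : ℝ) ∈ posTangentConeAt (Set.Ici a) a := by
    have : (a + 1) - a ∈ posTangentConeAt (Set.Ici a) a := by
      apply sub_mem_posTangentConeAt_of_segment_subset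
      intro z hz
      rcases hz with ⟨u, v, hu, hv, huv, hz⟩
      simp only [Set.mem_Ici]
      simp only [smul_eq_mul] at hz
      have hsum : u * a + v * a = a := by rw [← add_mul, huv, one_mul]
      nlinarith
    simpa using this
  have hF : HasFDerivWithinAt d
      (ContinuousLinearMap.smulRight (1 : ℝ →L[ℝ] ℝ) (deriv d a)) (Set.Ici a) a :=
    ((hdiff a).hasDerivAt.hasDerivWithinAt).hasFDerivWithinAt
  have := hloc.hasFDerivWithinAt_nonpos hF hcone
  simpa using this

/-- Inexact projected dual ascent contracts: with gradient error at most
half the true gradient magnitude, μ_d-strong concavity on [λ*, λ_t], L-smoothness and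
γ ≤ 1/(2L), one has λ_{t+1} - λ* ≤ (1 - γμ_d/4)(λ_t - λ*) for λ_t ≥ λ*. -/
theorem dual_ascent_contraction (d : ℝ → ℝ) (lamstar lamt γ μd Lsm e : ℝ)
    (hconc : ConcaveOn ℝ Set.univ d) (hdiff : Differentiable ℝ d)
    (hlamstar : 0 ≤ lamstar)
    (hmax : ∀ lam, 0 ≤ lam → d lam ≤ d lamstar)
    (hγ0 : 0 < γ) (hL : 0 < Lsm) (hμ : 0 < μd)
    (hγL : γ ≤ 1 / (2 * Lsm))
    (hsmooth : ∀ a b : ℝ, |deriv d a - deriv d b| ≤ Lsm * |a - b|)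
    (hsc : ∀ a b, a ∈ Set.Icc lamstar lamt → b ∈ Set.Icc lamstar lamt →
      (deriv d a - deriv d b) * (a - b) ≤ -μd * (a - b) ^ 2)
    (hd'neg : deriv d lamt ≤ 0)
    (he : |e| ≤ |deriv d lamt| / 2)
    (hlamt : lamstar ≤ lamt) :
    max (lamt + γ * (deriv d lamt + e)) 0 - lamstar ≤
      (1 - γ * μd / 4) * (lamt - lamstar) := by
  set g := deriv d lamt with hg
  have habsg : |g| = -g := abs_of_nonpos hd'neg
  have he' : e ≤ -g / 2 := by
    have := (abs_le.mp he).2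
    rw [habsg] at this; linarith
  have hghat : g + e ≤ g / 2 := by linarith
  rcases eq_or_lt_of_le hlamt with heq | hlt
  · -- lamstar = lamt
    subst heq
    have h1 : lamstar + γ * (g + e) ≤ lamstar := by nlinarith
    have h2 : max (lamstar + γ * (g + e)) 0 ≤ lamstar :=
      max_le h1 hlamstar
    simp only [sub_self, mul_zero]
    linarith
  · have hΔ : 0 < lamt - lamstar := by linarith
    have hs : deriv d lamstar ≤ 0 :=
      deriv_nonpos_of_isMaxOn_Ici hdiff (fun x hx => hmax x (le_trans hlamstar hx))
    have hsc' := hsc lamt lamstar ⟨hlamt, le_refl _⟩ ⟨le_refl _, hlamt⟩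
    -- g * Δ ≤ -μd Δ²
    have hgΔ : g * (lamt - lamstar) ≤ -μd * (lamt - lamstar) ^ 2 := by nlinarith
    have hgneg : μd * (lamt - lamstar) ≤ -g := by nlinarith
    have hμL : μd ≤ Lsm := by
      have hsm := hsmooth lamt lamstar
      rw [abs_of_nonneg (le_of_lt hΔ)] at hsm
      have h2 := (abs_le.mp hsm).1
      nlinarith [mul_le_mul_of_nonneg_right h2 (le_of_lt hΔ), mul_pos hΔ hΔ]
    have hγμ : γ * μd ≤ 1 / 2 := by
      have h1 : γ * μd ≤ (1 / (2 * Lsm)) * μd :=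
        mul_le_mul_of_nonneg_right hγL (le_of_lt hμ)
      have h2 : (1 / (2 * Lsm)) * μd ≤ 1 / 2 := by
        rw [div_mul_eq_mul_div, one_mul, div_le_div_iff₀ (by linarith) (by norm_num)]
        linarith
      linarith
    have hfac : 0 ≤ 1 - γ * μd / 4 := by linarith
    have hRHS : 0 ≤ (1 - γ * μd / 4) * (lamt - lamstar) :=
      mul_nonneg hfac (le_of_lt hΔ)
    have h1 : lamt + γ * (g + e) - lamstar ≤ (1 - γ * μd / 4) * (lamt - lamstar) := by
      nlinarith [mul_le_mul_of_nonneg_left hghat (le_of_lt hγ0),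
        mul_le_mul_of_nonneg_left hgneg (le_of_lt hγ0)]
    rw [sub_le_iff_le_add]
    exact max_le (by linarith) (by linarith)
end
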